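/- Let F: D → ℝ be defined on a convex set containing ν* by F(Δ) = L(ν* + Δ) − L(ν*) + λ(R(ν* + Δ) − R(ν*)), where L is differentiable, R is a norm-like convex penalty satisfying |R(ν* + Δ) − R(ν*)| ≤ 2‖Δ‖₁, and suppose the Bregman-type remainder δL = L(ν* + Δ) − L(ν*) − ⟨∇L(ν*), Δ⟩ satisfies δL ≥ (κ/3)‖Δ‖₂² for some κ > 0. If Δ̂ satisfies F(Δ̂) ≤ 0 and the parameter dimension is d, then ‖Δ̂‖₂ ≤ (3/κ)·√d·(‖∇L(ν*)‖_∞ + 2λ). -/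
import Mathlib


open Real Finset

/-- Deterministic core of the convergence-rate theorem: if the Bregman remainder of `L`
at `ν*` is `κ/3`-strongly convex, the convex penalty `R` satisfies
`|R(ν*+Δ) − R(ν*)| ≤ 2‖Δ‖₁`, and `Δ̂` satisfies `F(Δ̂) ≤ 0`, then
`‖Δ̂‖₂ ≤ (3/κ)·√d·(‖∇L(ν*)‖_∞ + 2λ)`. -/
theorem stmt_18 (d : ℕ) (hd : 0 < d)
    (L R : (Fin d → ℝ) → ℝ) (ν : Fin d → ℝ)
    (f' : (Fin d → ℝ) →L[ℝ] ℝ) (hf' : HasFDerivAt L f' ν)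
    (lam κ : ℝ) (hκ : 0 < κ) (hlam : 0 ≤ lam)
    (hRconv : ConvexOn ℝ Set.univ R)
    (hR : ∀ Δ : Fin d → ℝ, |R (ν + Δ) - R ν| ≤ 2 * ∑ i, |Δ i|)
    (hstrong : ∀ Δ : Fin d → ℝ,
      κ / 3 * ∑ i, (Δ i) ^ 2 ≤ L (ν + Δ) - L ν - f' Δ)
    (Δhat : Fin d → ℝ)
    (hF : L (ν + Δhat) - L ν + lam * (R (ν + Δhat) - R ν) ≤ 0) :
    Real.sqrt (∑ i, (Δhat i) ^ 2) ≤
      3 / κ * Real.sqrt d * ((⨆ i, |f' (Pi.single i 1)|) + 2 * lam) := by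
  haveI : Nonempty (Fin d) := Fin.pos_iff_nonempty.mp hd
  set M : ℝ := ⨆ i, |f' (Pi.single i 1)| with hM
  set S : ℝ := ∑ i, (Δhat i) ^ 2 with hSdef
  set N : ℝ := ∑ i, |Δhat i| with hNdef
  have hS0 : 0 ≤ S := Finset.sum_nonneg fun i _ => sq_nonneg _
  have hN0 : 0 ≤ N := Finset.sum_nonneg fun i _ => abs_nonneg _
  have hMb : ∀ i, |f' (Pi.single i 1)| ≤ M := fun i =>
    le_ciSup (f := fun j => |f' (Pi.single j 1)|) (Set.Finite.bddAbove (Set.finite_range _)) i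
  have hM0 : 0 ≤ M := le_trans (abs_nonneg _) (hMb (Classical.arbitrary _))
  -- f' Δhat expansion
  have hexp : f' Δhat = ∑ i, Δhat i * f' (Pi.single i 1) := by
    have h1 : Δhat = ∑ i, Δhat i • (Pi.single i (1:ℝ) : Fin d → ℝ) := by
      have := pi_eq_sum_univ Δhat
      convert this using 3 with i
      ext j
      simp [Pi.single_apply, eq_comm]
    calc f' Δhat = f' (∑ i, Δhat i • (Pi.single i (1:ℝ) : Fin d → ℝ)) := by rw [← h1]
      _ = ∑ i, Δhat i * f' (Pi.single i 1) := by
          rw [map_sum]; simp [smul_eq_mul]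
  have habs : |f' Δhat| ≤ M * N := by
    rw [hexp]
    calc |∑ i, Δhat i * f' (Pi.single i 1)| ≤ ∑ i, |Δhat i * f' (Pi.single i 1)| :=
          Finset.abs_sum_le_sum_abs _ _
      _ ≤ ∑ i, |Δhat i| * M := by
          refine Finset.sum_le_sum fun i _ => ?_
          rw [abs_mul]
          exact mul_le_mul_of_nonneg_left (hMb i) (abs_nonneg _)
      _ = M * N := by rw [← Finset.sum_mul]; ring
  -- Cauchy-Schwarz: N^2 ≤ d * S
  have hCS : N ≤ Real.sqrt d * Real.sqrt S := by
    have h1 : N ^ 2 ≤ d * S := by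
      have := sq_sum_le_card_mul_sum_sq (s := Finset.univ) (f := fun i => |Δhat i|)
      simpa [sq_abs] using this
    have := Real.sqrt_le_sqrt h1
    rwa [Real.sqrt_sq hN0, Real.sqrt_mul (by positivity)] at this
  -- main chain
  have hmain : κ / 3 * S ≤ (M + 2 * lam) * N := by
    have h1 := hstrong Δhat
    have h2 : L (ν + Δhat) - L ν ≤ 2 * lam * N := by
      have := hR Δhat
      have h3 : lam * (R (ν + Δhat) - R ν) ≥ -(lam * (2 * N)) := by
        have := (abs_le.mp (hR Δhat)).1
        nlinarith
      nlinarith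
    have h4 : -(f' Δhat) ≤ M * N := (neg_le.mpr (abs_le.mp habs).1).trans_eq rfl
    nlinarith
  -- conclude
  rcases eq_or_lt_of_le hS0 with h0 | hSpos
  · rw [← h0, Real.sqrt_zero]
    positivity
  · have hsq : Real.sqrt S * Real.sqrt S = S := Real.mul_self_sqrt hS0
    have hspos : 0 < Real.sqrt S := Real.sqrt_pos.mpr hSpos
    have key : κ / 3 * Real.sqrt S ≤ (M + 2 * lam) * Real.sqrt d := by
      have : κ / 3 * (Real.sqrt S * Real.sqrt S) ≤ (M + 2 * lam) * (Real.sqrt d * Real.sqrt S) := by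
        rw [hsq]
        exact hmain.trans (mul_le_mul_of_nonneg_left hCS (by positivity))
      have h2 : (κ / 3 * Real.sqrt S) * Real.sqrt S ≤ ((M + 2 * lam) * Real.sqrt d) * Real.sqrt S := by
        nlinarith
      exact le_of_mul_le_mul_right h2 hspos
    have : Real.sqrt S ≤ 3 / κ * ((M + 2 * lam) * Real.sqrt d) := by
      rw [div_mul_eq_mul_div, le_div_iff₀ hκ]
      nlinarith
    linarith [this, (by ring : 3 / κ * ((M + 2 * lam) * Real.sqrt d) =
      3 / κ * Real.sqrt d * (M + 2 * lam))]
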